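/- Let A be a Shin–Zettl matrix of odd order m = 2n+1 (n ≥ 1) on a finite interval [a,b] with A = A⁺, let α, β, γ, δ ∈ ℂ satisfy α·conj(γ) + conj(α)·γ = (−1)^n, β·conj(δ) + conj(β)·δ = (−1)^{n+1}, α·conj(δ) + conj(β)·γ = 0, β·conj(γ) + conj(α)·δ = 0, and αδ − βγ ≠ 0, and let Γ₁, Γ₂ : Dom(L_max) → ℂ^{2n+1} be the boundary maps defined below. Then for all y, z ∈ Dom(L_max): ⟨L_max y, z⟩_{L²} − ⟨y, L_max z⟩_{L²} = ⟨Γ₁y, Γ₂z⟩_{ℂ^{2n+1}} − ⟨Γ₂y, Γ₁z⟩_{ℂ^{2n+1}} (the abstract Green identity). -/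

import Mathlib

/-!
Write `Y = (D^[0]y, …, D^[2n]y)` and `[Y, Z] = Y* Λ Z` for the Lagrange form. Along the
first-order system `Y' = A Y + (D^[2n+1]y) e_{2n}`, the condition `A = A⁺` cancels every term of
`[Y, Z]'` except `−(conj (D^[2n+1]y) z + conj y D^[2n+1]z)`. The quasi-derivatives are absolutely
continuous, so integrating over `[a, b]` gives
`⟨L y, z⟩ − ⟨y, L z⟩ = i^{2n+1} ([Y, Z](b) − [Y, Z](a))`. The boundary maps regroup the right-hand
side: the outer components of `Γ₁, Γ₂` pair off directly, and the middle ones, `D^[n]y` at `a` and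
`b`, match exactly under the four conditions on `α, β, γ, δ`.
-/

open MeasureTheory Set Matrix Filter
open scoped ComplexInnerProductSpace

noncomputable section

/-- Lebesgue measure restricted to the interval `[a,b]`. -/
def muab (a b : ℝ) : MeasureTheory.Measure ℝ := MeasureTheory.volume.restrict (Set.Icc a b)

/-- `A` is a Shin–Zettl matrix of order `m` on `[a,b]`. -/
structure IsShinZettl (a b : ℝ) {m : ℕ} (A : ℝ → Matrix (Fin m) (Fin m) ℂ) : Prop where
  eq_zero_of_gt : ∀ (k s : Fin m), (k : ℕ) + 1 < (s : ℕ) → ∀ t : ℝ, A t k s = 0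
  integrable : ∀ (k s : Fin m), MeasureTheory.IntegrableOn (fun t => A t k s) (Set.Icc a b)
  superdiag_ne_zero : ∀ (k s : Fin m), (s : ℕ) = (k : ℕ) + 1 →
    ∀ᵐ t ∂(muab a b), A t k s ≠ 0

/-- `HasQD a b A y w f` : for `k < m` the function `w k` is the `k`-th quasi-derivative of
`y = w 0` relative to the Shin–Zettl matrix `A`, each being absolutely continuous on `[a,b]`
(an indefinite integral of an `L¹` function), and `f` is the `m`-th quasi-derivative `D^[m]y`. -/
def HasQD (a b : ℝ) {m : ℕ} (A : ℝ → Matrix (Fin m) (Fin m) ℂ)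
    (y : ℝ → ℂ) (w : Fin m → ℝ → ℂ) (f : ℝ → ℂ) : Prop :=
  (∀ j : Fin m, (j : ℕ) = 0 → w j = y) ∧
  MeasureTheory.IntegrableOn f (Set.Icc a b) ∧
  ∀ j : Fin m,
    MeasureTheory.IntegrableOn
      (fun s => (∑ k, A s j k * w k s) + (if (j : ℕ) + 1 = m then f s else 0)) (Set.Icc a b) ∧
    ∀ t ∈ Set.Icc a b,
      w j t = w j a +
        ∫ s in a..t, ((∑ k, A s j k * w k s) + (if (j : ℕ) + 1 = m then f s else 0))

/-- The Hilbert space `L²([a,b],ℂ)`. -/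
abbrev L2C (a b : ℝ) := MeasureTheory.Lp ℂ 2 (muab a b)

/-- The graph of the maximal quasi-differential operator `L_max` in `L²([a,b],ℂ)`. -/
def maxGraph (a b : ℝ) {m : ℕ} (A : ℝ → Matrix (Fin m) (Fin m) ℂ) :
    Set (L2C a b × L2C a b) :=
  {p | ∃ y w f, HasQD a b A y w f ∧ MeasureTheory.MemLp f 2 (muab a b) ∧
    (⇑p.1 =ᵐ[muab a b] y) ∧ (⇑p.2 =ᵐ[muab a b] fun t => Complex.I ^ m * f t)}

/-- The graph of the minimal quasi-differential operator `L_min` in `L²([a,b],ℂ)`. -/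
def minGraph (a b : ℝ) {m : ℕ} (A : ℝ → Matrix (Fin m) (Fin m) ℂ) :
    Set (L2C a b × L2C a b) :=
  {p | ∃ y w f, HasQD a b A y w f ∧ MeasureTheory.MemLp f 2 (muab a b) ∧
    (⇑p.1 =ᵐ[muab a b] y) ∧ (⇑p.2 =ᵐ[muab a b] fun t => Complex.I ^ m * f t) ∧
    ∀ j : Fin m, w j a = 0 ∧ w j b = 0}

/-- The matrix `Λ_m`: `(Λ_m)_{j,k} = (−1)^j` if `j + k = m + 1` (1-based indexing),
`0` otherwise. -/
def LambdaM (m : ℕ) : Matrix (Fin m) (Fin m) ℂ :=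
  Matrix.of fun j k => if (j : ℕ) + (k : ℕ) = m - 1 then (-1 : ℂ) ^ ((j : ℕ) + 1) else 0

/-- The formally adjoint (Lagrange adjoint) matrix `A⁺ = −Λ_m⁻¹ conj(Aᵀ) Λ_m`. -/
def formalAdjoint {m : ℕ} (A : ℝ → Matrix (Fin m) (Fin m) ℂ) :
    ℝ → Matrix (Fin m) (Fin m) ℂ :=
  fun t => -((LambdaM m)⁻¹ * (A t)ᴴ * LambdaM m)

/-- The graph of the Hilbert-space adjoint of the operator whose graph is `S`:
`(g, h)` belongs to it iff `⟪T y, g⟫ = ⟪y, h⟫` for every `(y, T y) ∈ S`. -/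
def adjointRel {a b : ℝ} (S : Set (L2C a b × L2C a b)) : Set (L2C a b × L2C a b) :=
  {q | ∀ p ∈ S, ⟪p.2, q.1⟫ = ⟪p.1, q.2⟫}


/-- The boundary map `Γ₁` for odd order `m = 2n+1` with coefficients `α, β`:
for `j < n` (`k = j+1 ∈ {1,…,n}`) the value is `i^{2n+1}(−1)^k D^[2n+1−k]y(a)`; for
`n ≤ j < 2n` (`k = j−n+1`) it is `i^{2n+1}(−1)^{k−1} D^[2n+1−k]y(b)`; the last component
is `i^{2n+1}(α D^[n]y(b) + β D^[n]y(a))`.  Here `w k = D^[k]y`. -/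
def Gamma1O (a b : ℝ) {n : ℕ} (αc βc : ℂ) (w : Fin (2 * n + 1) → ℝ → ℂ) :
    Fin (2 * n + 1) → ℂ := fun j =>
  if (j : ℕ) < n then
    Complex.I ^ (2 * n + 1) * (-1 : ℂ) ^ ((j : ℕ) + 1) *
      w ⟨2 * n - (j : ℕ), by omega⟩ a
  else if (j : ℕ) < 2 * n then
    Complex.I ^ (2 * n + 1) * (-1 : ℂ) ^ ((j : ℕ) - n) *
      w ⟨2 * n - ((j : ℕ) - n), by omega⟩ b
  else
    Complex.I ^ (2 * n + 1) * (αc * w ⟨n, by omega⟩ b + βc * w ⟨n, by omega⟩ a)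

/-- The boundary map `Γ₂` for odd order `m = 2n+1` with coefficients `γ, δ`:
for `j < n` (`k = j+1`) the value is `D^[k−1]y(a)`; for `n ≤ j < 2n` (`k = j−n+1`) it is
`D^[k−1]y(b)`; the last component is `γ D^[n]y(b) + δ D^[n]y(a)`.  Here `w k = D^[k]y`. -/
def Gamma2O (a b : ℝ) {n : ℕ} (γc δc : ℂ) (w : Fin (2 * n + 1) → ℝ → ℂ) :
    Fin (2 * n + 1) → ℂ := fun j =>
  if (j : ℕ) < n then w j a
  else if (j : ℕ) < 2 * n then w ⟨(j : ℕ) - n, by omega⟩ b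
  else γc * w ⟨n, by omega⟩ b + δc * w ⟨n, by omega⟩ a

open ComplexConjugate

section Primitive

variable {𝕜 : Type*} [RCLike 𝕜] {a b : ℝ}

theorem AbsolutelyContinuousOnInterval.congr {X : Type*} [PseudoMetricSpace X] {f g : ℝ → X}
    (hf : AbsolutelyContinuousOnInterval f a b) (hfg : EqOn f g (uIcc a b)) :
    AbsolutelyContinuousOnInterval g a b := by
  refine hf.congr' (eventually_inf_principal.mpr (Eventually.of_forall fun E hE => ?_))
  exact Finset.sum_congr rfl fun i hi => by rw [hfg (hE.1 i hi).1, hfg (hE.1 i hi).2]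

theorem AbsolutelyContinuousOnInterval.const {X : Type*} [PseudoMetricSpace X] (x : X) :
    AbsolutelyContinuousOnInterval (fun _ => x) a b :=
  (LipschitzWith.const x).lipschitzOnWith.absolutelyContinuousOnInterval

theorem IntervalIntegrable.absolutelyContinuousOnInterval_intervalIntegral_rclike {f : ℝ → 𝕜}
    {c : ℝ} (hf : IntervalIntegrable f volume a b) (hc : c ∈ uIcc a b) :
    AbsolutelyContinuousOnInterval (fun x => ∫ t in c..x, f t) a b := by
  have hre := IntervalIntegrable.absolutelyContinuousOnInterval_intervalIntegral
    (f := fun t => RCLike.re (f t)) ⟨hf.1.re, hf.2.re⟩ hc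
  have him := IntervalIntegrable.absolutelyContinuousOnInterval_intervalIntegral
    (f := fun t => RCLike.im (f t)) ⟨hf.1.im, hf.2.im⟩ hc
  refine ((hre.smul (AbsolutelyContinuousOnInterval.const (1 : 𝕜))).add
    (him.smul (AbsolutelyContinuousOnInterval.const (RCLike.I : 𝕜)))).congr fun x hx => ?_
  have hcx : IntervalIntegrable f volume c x := hf.mono_set (uIcc_subset_uIcc hc hx)
  simp only [Pi.add_apply, Pi.smul_apply', intervalIntegral.intervalIntegral_re hcx,
    intervalIntegral.intervalIntegral_im hcx, RCLike.real_smul_eq_coe_mul, mul_one,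
    RCLike.re_add_im]

theorem MeasureTheory.IntegrableOn.conj {s : Set ℝ} {f : ℝ → 𝕜} (hf : IntegrableOn f s) :
    IntegrableOn (fun t => conj (f t)) s :=
  (RCLike.conjCLE (K := 𝕜)).toContinuousLinearMap.integrable_comp hf

theorem continuousOn_of_eq_add_integral {u p : ℝ → 𝕜} (hab : a ≤ b)
    (hp : IntegrableOn p (Icc a b)) (hu : ∀ t ∈ Icc a b, u t = u a + ∫ s in a..t, p s) :
    ContinuousOn u (Icc a b) := by
  rw [← uIcc_of_le hab] at hp hu ⊢
  exact (continuousOn_const.add (intervalIntegral.continuousOn_primitive_interval hp)).congr hu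

theorem intervalIntegral.integral_mul_add_mul_eq_sub_of_eq_add_integral {u v p q : ℝ → 𝕜}
    (hab : a ≤ b) (hp : IntegrableOn p (Icc a b)) (hq : IntegrableOn q (Icc a b))
    (hu : ∀ t ∈ Icc a b, u t = u a + ∫ s in a..t, p s)
    (hv : ∀ t ∈ Icc a b, v t = v a + ∫ s in a..t, q s) :
    ∫ t in a..b, (p t * v t + u t * q t) = u b * v b - u a * v a := by
  rw [← uIcc_of_le hab] at hu hv
  rw [← uIcc_of_le hab, ← intervalIntegrable_iff'] at hp hq
  set U : ℝ → 𝕜 := fun t => u a + ∫ s in a..t, p s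
  set V : ℝ → 𝕜 := fun t => v a + ∫ s in a..t, q s
  have hU : AbsolutelyContinuousOnInterval U a b := (AbsolutelyContinuousOnInterval.const _).add
    (hp.absolutelyContinuousOnInterval_intervalIntegral_rclike left_mem_uIcc)
  have hV : AbsolutelyContinuousOnInterval V a b := (AbsolutelyContinuousOnInterval.const _).add
    (hq.absolutelyContinuousOnInterval_intervalIntegral_rclike left_mem_uIcc)
  set g : ℝ → 𝕜 := fun t => p t * V t + U t * q t
  have hg : IntervalIntegrable g volume a b :=
    (hp.mul_continuousOn hV.continuousOn).add (hq.continuousOn_mul hU.continuousOn)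
  -- `U * V - ∫ g` is absolutely continuous with derivative zero almost everywhere.
  have hH : AbsolutelyContinuousOnInterval (fun t => U t * V t - ∫ s in a..t, g s) a b :=
    (hU.fun_smul hV).sub (hg.absolutelyContinuousOnInterval_intervalIntegral_rclike left_mem_uIcc)
  obtain ⟨C, hC⟩ := hH.const_of_ae_hasDerivAt_zero (by
    filter_upwards [hp.ae_hasDerivAt_integral, hq.ae_hasDerivAt_integral,
      hg.ae_hasDerivAt_integral] with x hpx hqx hgx hx
    have := (((hpx hx a left_mem_uIcc).const_add (u a)).mul
      ((hqx hx a left_mem_uIcc).const_add (v a))).sub (hgx hx a left_mem_uIcc)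
    rwa [sub_self] at this)
  have hga : ∫ t in a..b, (p t * v t + u t * q t) = ∫ t in a..b, g t :=
    intervalIntegral.integral_congr fun t ht => by rw [hu t ht, hv t ht]
  have hCa := hC a left_mem_uIcc
  have hCb := hC b right_mem_uIcc
  simp only [U, V, intervalIntegral.integral_same, add_zero, sub_zero] at hCa hCb
  rw [hga, hu b right_mem_uIcc, hv b right_mem_uIcc]
  linear_combination hCa - hCb

theorem intervalIntegral.integral_conj_mul_add_conj_mul_eq_sub_of_eq_add_integral
    {u v p q : ℝ → 𝕜} (hab : a ≤ b) (hp : IntegrableOn p (Icc a b))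
    (hq : IntegrableOn q (Icc a b)) (hu : ∀ t ∈ Icc a b, u t = u a + ∫ s in a..t, p s)
    (hv : ∀ t ∈ Icc a b, v t = v a + ∫ s in a..t, q s) :
    ∫ t in a..b, (conj (p t) * v t + conj (u t) * q t) = conj (u b) * v b - conj (u a) * v a :=
  integral_mul_add_mul_eq_sub_of_eq_add_integral hab hp.conj hq
    (fun t ht => by rw [intervalIntegral.intervalIntegral_conj, ← map_add, ← hu t ht]) hv

theorem intervalIntegrable_conj_mul_of_integrableOn_of_continuousOn {u v : ℝ → 𝕜} (hab : a ≤ b)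
    (hu : IntegrableOn u (Icc a b)) (hv : ContinuousOn v (Icc a b)) :
    IntervalIntegrable (fun t => conj (u t) * v t) volume a b :=
  (intervalIntegrable_iff_integrableOn_Icc_of_le hab).mpr
    (hu.conj.mul_continuousOn hv isCompact_Icc)

theorem intervalIntegrable_conj_mul_of_continuousOn_of_integrableOn {u v : ℝ → 𝕜} (hab : a ≤ b)
    (hu : ContinuousOn u (Icc a b)) (hv : IntegrableOn v (Icc a b)) :
    IntervalIntegrable (fun t => conj (u t) * v t) volume a b :=
  (intervalIntegrable_iff_integrableOn_Icc_of_le hab).mpr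
    (IntegrableOn.continuousOn_mul (RCLike.continuous_conj.comp_continuousOn hu) hv isCompact_Icc)

end Primitive

theorem LambdaM_apply {m : ℕ} (j k : Fin m) :
    LambdaM m j k = if k = j.rev then (-1 : ℂ) ^ ((j : ℕ) + 1) else 0 := by
  simp only [LambdaM, Matrix.of_apply, Fin.ext_iff, Fin.val_rev]
  exact if_congr (by omega) rfl rfl

theorem LambdaM_mul_self {m : ℕ} (hm : Odd m) : LambdaM m * LambdaM m = 1 := by
  ext j k
  simp only [mul_apply, LambdaM_apply, ite_mul, zero_mul, Finset.sum_ite_eq', Finset.mem_univ,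
    if_true, Fin.rev_rev, one_apply, eq_comm (a := k)]
  split_ifs
  · rw [← pow_add, Fin.val_rev]
    exact Even.neg_one_pow (by obtain ⟨r, hr⟩ := hm; exact ⟨r + 1, by omega⟩)
  · simp

theorem conjTranspose_mul_LambdaM_add_LambdaM_mul {m : ℕ} (hm : Odd m)
    {M : Matrix (Fin m) (Fin m) ℂ} (hM : -((LambdaM m)⁻¹ * Mᴴ * LambdaM m) = M) :
    Mᴴ * LambdaM m + LambdaM m * M = 0 := by
  rw [inv_eq_left_inv (LambdaM_mul_self hm)] at hM
  have hΛM : LambdaM m * M = -(Mᴴ * LambdaM m) := by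
    conv_lhs => rw [← hM]
    rw [mul_neg, ← Matrix.mul_assoc, ← Matrix.mul_assoc, LambdaM_mul_self hm, Matrix.one_mul]
  rw [hΛM, add_neg_cancel]

def lagrangeForm {m : ℕ} (u v : Fin m → ℂ) : ℂ := star u ⬝ᵥ (LambdaM m *ᵥ v)

theorem lagrangeForm_add_left {m : ℕ} (u u' v : Fin m → ℂ) :
    lagrangeForm (u + u') v = lagrangeForm u v + lagrangeForm u' v := by
  rw [lagrangeForm, star_add, add_dotProduct, lagrangeForm, lagrangeForm]

theorem lagrangeForm_add_right {m : ℕ} (u v v' : Fin m → ℂ) :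
    lagrangeForm u (v + v') = lagrangeForm u v + lagrangeForm u v' := by
  rw [lagrangeForm, mulVec_add, dotProduct_add, lagrangeForm, lagrangeForm]

theorem lagrangeForm_eq_sum {m : ℕ} (u v : Fin m → ℂ) :
    lagrangeForm u v = ∑ j : Fin m, (-1 : ℂ) ^ ((j : ℕ) + 1) * (conj (u j) * v j.rev) := by
  simp only [lagrangeForm, dotProduct, mulVec, LambdaM_apply, ite_mul, zero_mul,
    Finset.sum_ite_eq', Finset.mem_univ, if_true, Pi.star_apply, RCLike.star_def]
  exact Finset.sum_congr rfl fun j _ => by ring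

/-- The derivative of `[W, Z]` along `W' = M W + f eₘ`, `Z' = M Z + g eₘ`; the `M`-terms cancel
by formal self-adjointness. -/
theorem lagrangeForm_mulVec_add_single_add_lagrangeForm {n : ℕ}
    {M : Matrix (Fin (2 * n + 1)) (Fin (2 * n + 1)) ℂ}
    (hM : Mᴴ * LambdaM (2 * n + 1) + LambdaM (2 * n + 1) * M = 0)
    (u v : Fin (2 * n + 1) → ℂ) (f g : ℂ) :
    lagrangeForm (M *ᵥ u + Pi.single (Fin.last (2 * n)) f) v +
        lagrangeForm u (M *ᵥ v + Pi.single (Fin.last (2 * n)) g) =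
      -(conj f * v 0 + conj (u 0) * g) := by
  have hcancel : lagrangeForm (M *ᵥ u) v + lagrangeForm u (M *ᵥ v) = 0 := by
    rw [lagrangeForm, lagrangeForm, star_mulVec, dotProduct_mulVec, vecMul_vecMul,
      Matrix.mulVec_mulVec, dotProduct_mulVec _ (LambdaM _ * M), ← add_dotProduct,
      ← vecMul_add, hM, vecMul_zero, zero_dotProduct]
  have hf : lagrangeForm (Pi.single (Fin.last (2 * n)) f) v = -(conj f * v 0) := by
    simp [lagrangeForm_eq_sum, Pi.single_apply, apply_ite (starRingEnd ℂ), pow_succ, pow_mul]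
  have hg : lagrangeForm u (Pi.single (Fin.last (2 * n)) g) = -(conj (u 0) * g) := by
    simp [lagrangeForm_eq_sum, Pi.single_apply, Fin.rev_eq_iff]
  rw [lagrangeForm_add_left, lagrangeForm_add_right, hf, hg]
  linear_combination hcancel

theorem Fin.sum_univ_two_mul_add_one {M : Type*} [AddCommMonoid M] {n : ℕ}
    (F : Fin (2 * n + 1) → M) :
    ∑ j, F j = ∑ i : Fin n, (F ⟨i, by omega⟩ + F ⟨n + i, by omega⟩) + F (Fin.last (2 * n)) := by
  rw [Fin.sum_univ_castSucc, ← Fin.sum_congr' _ (two_mul n).symm, Fin.sum_univ_add,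
    Finset.sum_add_distrib]
  rfl

theorem Fin.sum_univ_two_mul_add_one_rev {M : Type*} [AddCommMonoid M] {n : ℕ}
    (F : Fin (2 * n + 1) → M) :
    ∑ j, F j = ∑ i : Fin n, (F ⟨i, by omega⟩ + F (Fin.rev ⟨i, by omega⟩)) + F ⟨n, by omega⟩ := by
  rw [← Fin.sum_congr' _ (show n + 1 + n = 2 * n + 1 by omega), Fin.sum_univ_add,
    Fin.sum_univ_castSucc,
    ← Equiv.sum_comp Fin.revPerm (fun i : Fin n => F (Fin.cast (by omega) (Fin.natAdd (n + 1) i))),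
    Finset.sum_add_distrib, add_right_comm]
  congr 2
  refine Finset.sum_congr rfl fun i _ => congrArg F (Fin.ext ?_)
  simp only [Fin.revPerm_apply, Fin.val_cast, Fin.val_natAdd, Fin.val_rev]
  omega

theorem Complex.conj_I_pow_two_mul_add_one (n : ℕ) :
    conj (Complex.I ^ (2 * n + 1)) = -Complex.I ^ (2 * n + 1) := by
  rw [map_pow, Complex.conj_I, Odd.neg_pow ⟨n, rfl⟩]

theorem sum_conj_Gamma1O_mul_Gamma2O_sub_sum_conj_Gamma2O_mul_Gamma1O {a b : ℝ} {n : ℕ}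
    {α β γ δ : ℂ} (h1 : α * conj γ + conj α * γ = (-1 : ℂ) ^ n)
    (h2 : β * conj δ + conj β * δ = (-1 : ℂ) ^ (n + 1)) (h3 : α * conj δ + conj β * γ = 0)
    (h4 : β * conj γ + conj α * δ = 0) (u v : Fin (2 * n + 1) → ℝ → ℂ) :
    ∑ k, conj (Gamma1O a b α β u k) * Gamma2O a b γ δ v k -
        ∑ k, conj (Gamma2O a b γ δ u k) * Gamma1O a b α β v k =
      Complex.I ^ (2 * n + 1) *
        (lagrangeForm (fun j => u j b) (fun j => v j b) -
          lagrangeForm (fun j => u j a) (fun j => v j a)) := by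
  rw [Fin.sum_univ_two_mul_add_one, Fin.sum_univ_two_mul_add_one, lagrangeForm_eq_sum,
    lagrangeForm_eq_sum, Fin.sum_univ_two_mul_add_one_rev, Fin.sum_univ_two_mul_add_one_rev,
    add_sub_add_comm, add_sub_add_comm, ← Finset.sum_sub_distrib, ← Finset.sum_sub_distrib,
    mul_add, Finset.mul_sum]
  have hlt (i : Fin n) : n + (i : ℕ) < 2 * n := by omega
  have hnlt : ¬ 2 * n < n := by omega
  have hsign (i : Fin n) : (-1 : ℂ) ^ (2 * n - i + 1) = (-1) ^ ((i : ℕ) + 1) := by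
    rw [neg_one_pow_eq_pow_mod_two, neg_one_pow_eq_pow_mod_two (n := (i : ℕ) + 1)]
    congr 1
    omega
  have hrev (i : Fin n) : (Fin.rev ⟨i, by omega⟩ : Fin (2 * n + 1)) = ⟨2 * n - i, by omega⟩ :=
    Fin.ext (by simp only [Fin.val_rev]; omega)
  have hrev' (i : Fin n) : (Fin.rev ⟨2 * n - i, by omega⟩ : Fin (2 * n + 1)) = ⟨i, by omega⟩ :=
    Fin.ext (by simp only [Fin.val_rev]; omega)
  have hrev_mid : (Fin.rev ⟨n, by omega⟩ : Fin (2 * n + 1)) = ⟨n, by omega⟩ :=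
    Fin.ext (by simp only [Fin.val_rev]; omega)
  simp only [Gamma1O, Gamma2O, hrev, hrev', hsign, hrev_mid, Fin.is_lt, Fin.val_last, hlt, hnlt,
    lt_irrefl, if_true, if_false, add_lt_iff_neg_left, not_lt_zero, add_tsub_cancel_left, map_mul,
    map_add]
  simp only [Complex.conj_I_pow_two_mul_add_one]
  simp only [map_pow, map_neg, map_one]
  congr 1
  · exact Finset.sum_congr rfl fun i _ => by ring
  · linear_combination
      (-Complex.I ^ (2 * n + 1) * conj (u ⟨n, by omega⟩ b) * v ⟨n, by omega⟩ b) * h1 +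
      (-Complex.I ^ (2 * n + 1) * conj (u ⟨n, by omega⟩ a) * v ⟨n, by omega⟩ a) * h2 +
      (-Complex.I ^ (2 * n + 1) * conj (u ⟨n, by omega⟩ a) * v ⟨n, by omega⟩ b) * h3 +
      (-Complex.I ^ (2 * n + 1) * conj (u ⟨n, by omega⟩ b) * v ⟨n, by omega⟩ a) * h4

section HasQD

variable {a b : ℝ} {m : ℕ} {A : ℝ → Matrix (Fin (m + 1)) (Fin (m + 1)) ℂ} {y : ℝ → ℂ}
  {w : Fin (m + 1) → ℝ → ℂ} {f : ℝ → ℂ}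

/-- The right-hand side of the first-order system `W' = A W + f eₘ` for the vector
`W = (D^[0]y, …, D^[m]y)`. -/
def qdDeriv (A : ℝ → Matrix (Fin (m + 1)) (Fin (m + 1)) ℂ) (w : Fin (m + 1) → ℝ → ℂ)
    (f : ℝ → ℂ) (t : ℝ) : Fin (m + 1) → ℂ :=
  A t *ᵥ (fun k => w k t) + Pi.single (Fin.last m) (f t)

theorem qdDeriv_apply (t : ℝ) (j : Fin (m + 1)) :
    qdDeriv A w f t j = (∑ k, A t j k * w k t) + if (j : ℕ) + 1 = m + 1 then f t else 0 := by
  simp [qdDeriv, mulVec, dotProduct, Pi.single_apply, Fin.ext_iff]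

theorem HasQD.apply_zero (h : HasQD a b A y w f) : w 0 = y := h.1 0 rfl

theorem HasQD.integrableOn (h : HasQD a b A y w f) : IntegrableOn f (Icc a b) := h.2.1

theorem HasQD.integrableOn_qdDeriv (h : HasQD a b A y w f) (j : Fin (m + 1)) :
    IntegrableOn (fun t => qdDeriv A w f t j) (Icc a b) := by
  simpa only [qdDeriv_apply] using (h.2.2 j).1

theorem HasQD.eq_add_integral (h : HasQD a b A y w f) (j : Fin (m + 1)) :
    ∀ t ∈ Icc a b, w j t = w j a + ∫ s in a..t, qdDeriv A w f s j := by
  simpa only [qdDeriv_apply] using (h.2.2 j).2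

theorem HasQD.continuousOn (h : HasQD a b A y w f) (hab : a ≤ b) (j : Fin (m + 1)) :
    ContinuousOn (w j) (Icc a b) :=
  continuousOn_of_eq_add_integral hab (h.integrableOn_qdDeriv j) (h.eq_add_integral j)

end HasQD

theorem HasQD.integral_conj_mul_add_integral_conj_mul {a b : ℝ} {n : ℕ}
    {A : ℝ → Matrix (Fin (2 * n + 1)) (Fin (2 * n + 1)) ℂ} {y z fy fz : ℝ → ℂ}
    {wy wz : Fin (2 * n + 1) → ℝ → ℂ} (hab : a ≤ b) (hsa : ∀ t, formalAdjoint A t = A t)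
    (hy : HasQD a b A y wy fy) (hz : HasQD a b A z wz fz) :
    (∫ t in a..b, conj (fy t) * z t) + ∫ t in a..b, conj (y t) * fz t =
      lagrangeForm (fun j => wy j a) (fun j => wz j a) -
        lagrangeForm (fun j => wy j b) (fun j => wz j b) := by
  set term : Fin (2 * n + 1) → ℝ → ℂ := fun j t =>
    conj (qdDeriv A wy fy t j) * wz j.rev t + conj (wy j t) * qdDeriv A wz fz t j.rev
  have hpointwise (t : ℝ) : conj (fy t) * z t + conj (y t) * fz t =
      -∑ j : Fin (2 * n + 1), (-1 : ℂ) ^ ((j : ℕ) + 1) * term j t := by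
    have hA := conjTranspose_mul_LambdaM_add_LambdaM_mul (odd_two_mul_add_one n) (hsa t)
    have hsum : ∑ j : Fin (2 * n + 1), (-1 : ℂ) ^ ((j : ℕ) + 1) * term j t =
        lagrangeForm (qdDeriv A wy fy t) (fun k => wz k t) +
          lagrangeForm (fun k => wy k t) (qdDeriv A wz fz t) := by
      simp only [term, mul_add, Finset.sum_add_distrib, lagrangeForm_eq_sum]
    rw [hsum, qdDeriv, qdDeriv, lagrangeForm_mulVec_add_single_add_lagrangeForm hA, neg_neg,
      hy.apply_zero, hz.apply_zero]
  have hterm (j : Fin (2 * n + 1)) :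
      ∫ t in a..b, term j t = conj (wy j b) * wz j.rev b - conj (wy j a) * wz j.rev a :=
    intervalIntegral.integral_conj_mul_add_conj_mul_eq_sub_of_eq_add_integral hab
      (hy.integrableOn_qdDeriv j) (hz.integrableOn_qdDeriv j.rev) (hy.eq_add_integral j)
      (hz.eq_add_integral j.rev)
  have hterm_int (j : Fin (2 * n + 1)) : IntervalIntegrable (term j) volume a b :=
    (intervalIntegrable_conj_mul_of_integrableOn_of_continuousOn hab (hy.integrableOn_qdDeriv j)
      (hz.continuousOn hab j.rev)).add
    (intervalIntegrable_conj_mul_of_continuousOn_of_integrableOn hab (hy.continuousOn hab j)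
      (hz.integrableOn_qdDeriv j.rev))
  rw [← intervalIntegral.integral_add
      (intervalIntegrable_conj_mul_of_integrableOn_of_continuousOn hab hy.integrableOn
        (hz.apply_zero ▸ hz.continuousOn hab 0))
      (intervalIntegrable_conj_mul_of_continuousOn_of_integrableOn hab
        (hy.apply_zero ▸ hy.continuousOn hab 0) hz.integrableOn),
    intervalIntegral.integral_congr fun t _ => hpointwise t, intervalIntegral.integral_neg,
    intervalIntegral.integral_finsetSum fun j _ => (hterm_int j).const_mul _,
    lagrangeForm_eq_sum, lagrangeForm_eq_sum, ← Finset.sum_sub_distrib, ← Finset.sum_neg_distrib]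
  refine Finset.sum_congr rfl fun j _ => ?_
  rw [intervalIntegral.integral_const_mul, hterm]
  ring

theorem green_identity_odd_general
    (a b : ℝ) (hab : a < b) (n : ℕ)
    (A : ℝ → Matrix (Fin (2 * n + 1)) (Fin (2 * n + 1)) ℂ)
    (hsa : ∀ t : ℝ, formalAdjoint A t = A t)
    (αc βc γc δc : ℂ)
    (h1 : αc * (starRingEnd ℂ) γc + (starRingEnd ℂ) αc * γc = (-1 : ℂ) ^ n)
    (h2 : βc * (starRingEnd ℂ) δc + (starRingEnd ℂ) βc * δc = (-1 : ℂ) ^ (n + 1))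
    (h3 : αc * (starRingEnd ℂ) δc + (starRingEnd ℂ) βc * γc = 0)
    (h4 : βc * (starRingEnd ℂ) γc + (starRingEnd ℂ) αc * δc = 0)
    (y z : ℝ → ℂ) (wy wz : Fin (2 * n + 1) → ℝ → ℂ) (fy fz : ℝ → ℂ)
    (hy : HasQD a b A y wy fy)
    (hz : HasQD a b A z wz fz) :
    (∫ t in a..b, (starRingEnd ℂ) (Complex.I ^ (2 * n + 1) * fy t) * z t) -
      (∫ t in a..b, (starRingEnd ℂ) (y t) * (Complex.I ^ (2 * n + 1) * fz t)) =
    (∑ k : Fin (2 * n + 1),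
        (starRingEnd ℂ) (Gamma1O a b αc βc wy k) * Gamma2O a b γc δc wz k) -
      ∑ k : Fin (2 * n + 1),
        (starRingEnd ℂ) (Gamma2O a b γc δc wy k) * Gamma1O a b αc βc wz k := by
  have hleft : ∫ t in a..b, conj (Complex.I ^ (2 * n + 1) * fy t) * z t =
      -Complex.I ^ (2 * n + 1) * ∫ t in a..b, conj (fy t) * z t := by
    simp only [map_mul, Complex.conj_I_pow_two_mul_add_one, mul_assoc,
      intervalIntegral.integral_const_mul]
  have hright : ∫ t in a..b, conj (y t) * (Complex.I ^ (2 * n + 1) * fz t) =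
      Complex.I ^ (2 * n + 1) * ∫ t in a..b, conj (y t) * fz t := by
    simp only [mul_left_comm (conj _), intervalIntegral.integral_const_mul]
  rw [hleft, hright, sum_conj_Gamma1O_mul_Gamma2O_sub_sum_conj_Gamma2O_mul_Gamma1O h1 h2 h3 h4]
  linear_combination
    -Complex.I ^ (2 * n + 1) * hy.integral_conj_mul_add_integral_conj_mul hab.le hsa hz

/-- **The abstract Green identity for odd order** `m = 2n+1`, `n ≥ 1`.  For a formally
self-adjoint Shin–Zettl matrix `A = A⁺` of order `2n+1` on `[a,b]`, coefficients
`α, β, γ, δ ∈ ℂ` with `α conj γ + conj α γ = (−1)^n`, `β conj δ + conj β δ = (−1)^{n+1}`,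
`α conj δ + conj β γ = 0`, `β conj γ + conj α δ = 0`, `αδ − βγ ≠ 0`, and any
`y, z ∈ Dom(L_max)` (with quasi-derivative data `wy, fy` and `wz, fz`):
`⟨L_max y, z⟩_{L²} − ⟨y, L_max z⟩_{L²} = ⟨Γ₁y, Γ₂z⟩_{ℂ^{2n+1}} − ⟨Γ₂y, Γ₁z⟩_{ℂ^{2n+1}}`,
all inner products being conjugate-linear in the first argument. -/
theorem green_identity_odd
    (a b : ℝ) (hab : a < b) (n : ℕ) (hn : 1 ≤ n)
    (A : ℝ → Matrix (Fin (2 * n + 1)) (Fin (2 * n + 1)) ℂ) (hA : IsShinZettl a b A)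
    (hsa : ∀ t : ℝ, formalAdjoint A t = A t)
    (αc βc γc δc : ℂ)
    (h1 : αc * (starRingEnd ℂ) γc + (starRingEnd ℂ) αc * γc = (-1 : ℂ) ^ n)
    (h2 : βc * (starRingEnd ℂ) δc + (starRingEnd ℂ) βc * δc = (-1 : ℂ) ^ (n + 1))
    (h3 : αc * (starRingEnd ℂ) δc + (starRingEnd ℂ) βc * γc = 0)
    (h4 : βc * (starRingEnd ℂ) γc + (starRingEnd ℂ) αc * δc = 0)
    (h5 : αc * δc - βc * γc ≠ 0)
    (y z : ℝ → ℂ) (wy wz : Fin (2 * n + 1) → ℝ → ℂ) (fy fz : ℝ → ℂ)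
    (hy : HasQD a b A y wy fy) (hy2 : MeasureTheory.MemLp fy 2 (muab a b))
    (hz : HasQD a b A z wz fz) (hz2 : MeasureTheory.MemLp fz 2 (muab a b)) :
    (∫ t in a..b, (starRingEnd ℂ) (Complex.I ^ (2 * n + 1) * fy t) * z t) -
      (∫ t in a..b, (starRingEnd ℂ) (y t) * (Complex.I ^ (2 * n + 1) * fz t)) =
    (∑ k : Fin (2 * n + 1),
        (starRingEnd ℂ) (Gamma1O a b αc βc wy k) * Gamma2O a b γc δc wz k) -
      ∑ k : Fin (2 * n + 1),
        (starRingEnd ℂ) (Gamma2O a b γc δc wy k) * Gamma1O a b αc βc wz k :=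
  green_identity_odd_general a b hab n A hsa αc βc γc δc h1 h2 h3 h4 y z wy wz fy fz hy hz

end
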